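/- arXiv:2407.17784 — 5 statements merged into one kernel-verified Lean document; each statement's English description precedes it below -/
import Mathlib

section
/- Let G = (V, E) be a finite word-representable graph and let V1, …, Vk be pairwise disjoint subsets of V. Let E(Vi) denote the set of all edges of G having both endpoints in Vi. Then the graph H = G \ (E(V1) ∪ ⋯ ∪ E(Vk)), obtained from G by removing every edge whose both endpoints lie in the same set Vi (for some 1 ≤ i ≤ k), is 1-11-representable. -/
/-- The subsequence of `w` consisting of all occurrences of `x` and `y`. -/
def restrictWord {V : Type*} [DecidableEq V] (w : List V) (x y : V) : List V :=
  w.filter (fun z => decide (z = x ∨ z = y))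

/-- The number of occurrences of the consecutive pattern 11 in a word:
the number of indices `i` such that the `i`-th and `(i+1)`-th letters are equal. -/
def pattern11Count {V : Type*} [DecidableEq V] (l : List V) : ℕ :=
  ((l.zip l.tail).filter (fun p => decide (p.1 = p.2))).length

/-- A word `w` over `V` `k`-11-represents the simple graph `G` if every vertex occurs in `w`
and, for all distinct `x y`, `xy` is an edge iff `w|_{x,y}` has at most `k` occurrences of
the pattern 11. -/
def Represents {V : Type*} [DecidableEq V] (k : ℕ) (w : List V) (G : SimpleGraph V) : Prop :=
  (∀ v : V, v ∈ w) ∧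
  ∀ x y : V, x ≠ y → (G.Adj x y ↔ pattern11Count (restrictWord w x y) ≤ k)

/-- A graph is `k`-11-representable if some word `k`-11-represents it. -/
def Representable {V : Type*} [DecidableEq V] (k : ℕ) (G : SimpleGraph V) : Prop :=
  ∃ w : List V, Represents k w G

/-- A word that is a permutation of the vertex set: each vertex occurs exactly once. -/
def IsPermWord {V : Type*} (p : List V) : Prop :=
  p.Nodup ∧ ∀ v : V, v ∈ p

/-- A graph is permutationally `k`-11-representable if some concatenation of permutations
of the vertex set `k`-11-represents it. -/
def PermRepresentable {V : Type*} [DecidableEq V] (k : ℕ) (G : SimpleGraph V) : Prop :=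
  ∃ ps : List (List V), (∀ p ∈ ps, IsPermWord p) ∧ Represents k ps.flatten G

/-!
Start from a word `w` representing `G` in which every letter occurs equally often (repeatedly
append, in order of last occurrence, the letters occurring fewer than the maximal number of
times). For an edge `xy` of `G` the restriction `A = w|_{x,y}` alternates and has as many `x`s as
`y`s, so it starts with some `s` and ends with `e ≠ s`; for a non-edge `A` contains a `11`.

Let `B_i` list `V_i` in order of last occurrence in `w` and take `X₁ w w X₂` with
`X₁ = rev B_1 ⋯ rev B_k` and `X₂ = rev (B_1 ⋯ B_k)`; its restriction to `{x, y}` is `P A A Q`.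
A non-edge of `G` gives at least two `11`s inside `A A`. For an edge, `A A` has none and a `11`
can only occur at the borders `P|A` and `A|Q`. If `x, y` lie in the same `V_i`, then
`P = Q = e s` and both borders give one. Otherwise each block contributes at most one letter, so
`Q` is the reversal of the repetition-free word `P`, whose last letter cannot equal both `s`
and `e`.
-/

section Pattern11

variable {V : Type*} [DecidableEq V]

lemma pattern11Count_cons_cons (a b : V) (l : List V) :
    pattern11Count (a :: b :: l) = (if a = b then 1 else 0) + pattern11Count (b :: l) := by
  unfold pattern11Count
  by_cases h : a = b <;> simp [h, Nat.add_comm]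

lemma pattern11Count_append (u v : List V) :
    pattern11Count (u ++ v) = pattern11Count u + pattern11Count v +
      if u ≠ [] ∧ u.getLast? = v.head? then 1 else 0 := by
  induction u with
  | nil => simp [pattern11Count]
  | cons a u ih =>
    rcases u with _ | ⟨b, u⟩
    · rcases v with _ | ⟨c, v⟩
      · simp [pattern11Count]
      · rw [List.singleton_append, pattern11Count_cons_cons]
        simp [show pattern11Count [a] = 0 from rfl, Nat.add_comm]
    · simp only [List.cons_append, pattern11Count_cons_cons] at ih ⊢
      simp [ih, List.getLast?_cons_cons]
      omega

lemma pattern11Count_le_append_left (u v : List V) :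
    pattern11Count u ≤ pattern11Count (u ++ v) := by
  rw [pattern11Count_append]; omega

lemma pattern11Count_eq_zero_of_nodup {l : List V} (hl : l.Nodup) : pattern11Count l = 0 := by
  induction l with
  | nil => rfl
  | cons a l ih =>
    rcases l with _ | ⟨b, l⟩
    · rfl
    · rw [List.nodup_cons] at hl
      rw [pattern11Count_cons_cons, ih hl.2,
        if_neg fun h : a = b => hl.1 (h ▸ List.mem_cons_self)]

lemma pattern11Count_sandwich {P A Q : List V} {s e : V} (hs : A.head? = some s)
    (he : A.getLast? = some e) (hse : s ≠ e) :
    pattern11Count (P ++ A ++ A ++ Q) = pattern11Count P + 2 * pattern11Count A + pattern11Count Q +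
      (if P.getLast? = some s then 1 else 0) + (if Q.head? = some e then 1 else 0) := by
  have hA : A ≠ [] := by rintro rfl; simp at hs
  simp only [pattern11Count_append, List.getLast?_append, he, hs]
  by_cases hP : P = [] <;> simp [hA, hP, hse, eq_comm (a := some e)] <;> omega

lemma two_mul_pattern11Count_le_sandwich (P A Q : List V) :
    2 * pattern11Count A ≤ pattern11Count (P ++ A ++ A ++ Q) := by
  simp only [pattern11Count_append]; omega

lemma count_head_eq_of_pattern11Count_eq_zero {a b : V} (hab : a ≠ b) (t : List V)
    (hmem : ∀ z ∈ a :: t, z = a ∨ z = b) (h0 : pattern11Count (a :: t) = 0) :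
    (a :: t).count a = (a :: t).count b + if (a :: t).getLast? = some a then 1 else 0 := by
  induction t generalizing a b with
  | nil => simp [hab]
  | cons c t ih =>
    rw [pattern11Count_cons_cons] at h0
    have hac : a ≠ c := fun h => by simp [h] at h0
    have hcb : c = b := (hmem c (by simp)).resolve_left (Ne.symm hac)
    subst hcb
    have ih' := ih hab.symm (fun z hz => (hmem z (List.mem_cons_of_mem _ hz)).symm) (by omega)
    rw [List.getLast?_cons_cons]
    obtain ⟨l, hl⟩ : ∃ l, (c :: t).getLast? = some l := ⟨_, List.getLast?_cons⟩
    rcases hmem l (List.mem_cons_of_mem _ (List.mem_of_getLast? hl)) with rfl | rfl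
    all_goals simp only [hl, List.count_cons_self, List.count_cons_of_ne hac,
      List.count_cons_of_ne hac.symm] at ih' ⊢
    all_goals simp [hab, hab.symm] at ih' ⊢; omega

lemma head_ne_getLast_of_count_eq {x y : V} (hxy : x ≠ y) {A : List V}
    (hmem : ∀ z ∈ A, z = x ∨ z = y) (h0 : pattern11Count A = 0) (hc : A.count x = A.count y)
    {s e : V} (hs : A.head? = some s) (he : A.getLast? = some e) : s ≠ e := by
  obtain ⟨t, rfl⟩ : ∃ t, A = s :: t := List.head?_eq_some_iff.1 hs
  rintro rfl
  rcases hmem s List.mem_cons_self with rfl | rfl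
  · have := count_head_eq_of_pattern11Count_eq_zero hxy t hmem h0
    simp only [he, if_true] at this; omega
  · have := count_head_eq_of_pattern11Count_eq_zero hxy.symm t
      (fun z hz => (hmem z hz).symm) h0
    simp only [he, if_true] at this; omega

lemma getLast_eq_of_count_lt {x y : V} (hxy : x ≠ y) {A : List V}
    (hmem : ∀ z ∈ A, z = x ∨ z = y) (h0 : pattern11Count A = 0) (hc : A.count x < A.count y)
    {e : V} (he : A.getLast? = some e) : e = y := by
  obtain ⟨s, t, rfl⟩ : ∃ s t, A = s :: t := List.exists_cons_of_ne_nil (by rintro rfl; simp at he)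
  rcases hmem s List.mem_cons_self with rfl | rfl
  · have := count_head_eq_of_pattern11Count_eq_zero hxy t hmem h0
    omega
  · have := count_head_eq_of_pattern11Count_eq_zero hxy.symm t
      (fun z hz => (hmem z hz).symm) h0
    rw [he] at this
    split_ifs at this with h
    · exact Option.some_inj.1 h
    · omega

end Pattern11

namespace List

lemma flatMap_eq_of_forall_ne_eq_nil {ι β : Type*} {l : List ι} {f : ι → List β} {i : ι}
    (hl : l.Nodup) (hi : i ∈ l) (h : ∀ j ≠ i, f j = []) : l.flatMap f = f i := by
  obtain ⟨l₁, l₂, rfl⟩ := append_of_mem hi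
  have hi₁ : i ∉ l₁ := fun hm => (nodup_append.1 hl).2.2 i hm i mem_cons_self rfl
  have hi₂ : i ∉ l₂ := (nodup_cons.1 (nodup_append.1 hl).2.1).1
  simp only [flatMap_append, flatMap_cons, flatMap_eq_nil_iff.2
    (fun j hj => h j (fun hji => hi₁ (hji ▸ hj))), flatMap_eq_nil_iff.2
    (fun j hj => h j (fun hji => hi₂ (hji ▸ hj))), nil_append, append_nil]

variable {α : Type*} [DecidableEq α]

lemma filter_dedup (p : α → Bool) (l : List α) : l.dedup.filter p = (l.filter p).dedup := by
  induction l with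
  | nil => rfl
  | cons a l ih =>
    by_cases ha : a ∈ l
    · by_cases hp : p a
      · have : a ∈ l.filter p := mem_filter.2 ⟨ha, hp⟩
        simp [dedup_cons_of_mem ha, hp, dedup_cons_of_mem this, ih]
      · simp [dedup_cons_of_mem ha, hp, ih]
    · have : a ∉ l.filter p := fun h => ha (mem_filter.1 h).1
      by_cases hp : p a <;> simp [dedup_cons_of_notMem ha, hp, ih, dedup_cons_of_notMem this]

lemma getLast?_dedup (l : List α) : l.dedup.getLast? = l.getLast? := by
  rcases l.eq_nil_or_concat with rfl | ⟨l, a, rfl⟩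
  · rfl
  · obtain ⟨u, hu⟩ := suffix_union_right l [a]
    rw [concat_eq_append, dedup_append, (nodup_singleton a).dedup, ← hu]
    simp

lemma dedup_eq_pair {l : List α} {a e : α} (hae : a ≠ e) (ha : a ∈ l)
    (hl : ∀ z ∈ l, z = a ∨ z = e) (he : l.getLast? = some e) : l.dedup = [a, e] := by
  obtain ⟨d, hd⟩ := getLast?_eq_some_iff.1 ((getLast?_dedup l).trans he)
  have hnd : (d ++ [e]).Nodup := hd ▸ nodup_dedup l
  have had : a ∈ d := by
    have : a ∈ d ++ [e] := hd ▸ mem_dedup.2 ha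
    simpa [hae] using this
  have hsub : d ⊆ [a] := fun z hz => by
    have hz' : z ∈ l := mem_dedup.1 (hd ▸ mem_append_left _ hz)
    rcases hl z hz' with rfl | rfl
    · exact mem_singleton_self _
    · exact absurd rfl ((nodup_append.1 hnd).2.2 z hz z (mem_singleton_self _))
  have hlen := ((nodup_append.1 hnd).1.subperm hsub).length_le
  rcases d with _ | ⟨b, _ | ⟨c, d⟩⟩
  · simp at had
  · simp_all
  · simp at hlen

end List

section RestrictWord

variable {V : Type*} [DecidableEq V]

lemma restrictWord_append (u v : List V) (x y : V) :
    restrictWord (u ++ v) x y = restrictWord u x y ++ restrictWord v x y :=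
  List.filter_append _ _

lemma mem_restrictWord {w : List V} {x y z : V} :
    z ∈ restrictWord w x y ↔ z ∈ w ∧ (z = x ∨ z = y) := by
  simp [restrictWord]

lemma count_restrictWord {w : List V} {x y z : V} (hz : z = x ∨ z = y) :
    (restrictWord w x y).count z = w.count z :=
  List.count_filter (by simpa using hz)

lemma restrictWord_dedup (w : List V) (x y : V) :
    restrictWord w.dedup x y = (restrictWord w x y).dedup :=
  List.filter_dedup _ w

lemma dedup_restrictWord_eq_pair {w : List V} {x y e : V} (hxy : x ≠ y) (hx : x ∈ w) (hy : y ∈ w)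
    (he : (restrictWord w x y).getLast? = some e) :
    ∃ t, t ≠ e ∧ (∀ z ∈ restrictWord w x y, z = t ∨ z = e) ∧
      (restrictWord w x y).dedup = [t, e] := by
  have hmem : ∀ z ∈ restrictWord w x y, z = x ∨ z = y := fun z hz => (mem_restrictWord.1 hz).2
  have hxA : x ∈ restrictWord w x y := mem_restrictWord.2 ⟨hx, .inl rfl⟩
  have hyA : y ∈ restrictWord w x y := mem_restrictWord.2 ⟨hy, .inr rfl⟩
  rcases hmem e (List.mem_of_getLast? he) with rfl | rfl
  · exact ⟨y, hxy.symm, fun z hz => (hmem z hz).symm, List.dedup_eq_pair hxy.symm hyA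
      (fun z hz => (hmem z hz).symm) he⟩
  · exact ⟨x, hxy, hmem, List.dedup_eq_pair hxy hxA hmem he⟩

end RestrictWord

section Uniform

variable {V : Type*} [DecidableEq V]

lemma Represents.append_dedup_filter_count_lt {G : SimpleGraph V} {w : List V}
    (hw : Represents 0 w G) (M : ℕ) :
    Represents 0 (w ++ w.dedup.filter (fun v => w.count v < M)) G := by
  refine ⟨fun v => List.mem_append_left _ (hw.1 v), fun x y hxy => ?_⟩
  rw [hw.2 x y hxy, restrictWord_append]
  set A := restrictWord w x y
  set P := restrictWord (w.dedup.filter fun v => w.count v < M) x y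
  refine ⟨fun hA => ?_, (pattern11Count_le_append_left A P).trans⟩
  have h0 : pattern11Count A = 0 := Nat.le_zero.1 hA
  obtain ⟨e, he⟩ := Option.ne_none_iff_exists'.1
    (mt List.getLast?_eq_none_iff.1 (List.ne_nil_of_mem (mem_restrictWord.2 ⟨hw.1 x, .inl rfl⟩)))
  obtain ⟨t, hte, hmem, hded⟩ := dedup_restrictWord_eq_pair hxy (hw.1 x) (hw.1 y) he
  have hP : P = [t, e].filter fun v => w.count v < M := by
    rw [← hded, ← restrictWord_dedup]
    exact List.filter_comm _ _ _
  -- `P` could only start with `e` if `e` occurred fewer than `M` times in `w` and `t` did not;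
  -- but then the alternating word `A` would have to end with its more frequent letter `t`.
  have hhead : P.head? ≠ some e := by
    intro h
    have hnt : ¬ w.count t < M := fun ht => by simp [hP, List.filter_cons, ht, hte] at h
    have hde : w.count e < M := by
      by_contra hne
      simp [hP, hnt, hne] at h
    have htA : t ∈ A := List.mem_dedup.1 (hded ▸ List.mem_cons_self)
    have hcount : A.count e < A.count t := by
      rw [count_restrictWord (mem_restrictWord.1 (List.mem_of_getLast? he)).2,
        count_restrictWord (mem_restrictWord.1 htA).2]
      omega
    exact hte (getLast_eq_of_count_lt hte.symm (fun z hz => (hmem z hz).symm) h0 hcount he).symm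
  have hPnd : P.Nodup := ((List.nodup_dedup w).filter _).filter _
  rw [pattern11Count_append, h0, pattern11Count_eq_zero_of_nodup hPnd, he]
  simp [Ne.symm hhead]

lemma Represents.exists_forall_count_eq_min {G : SimpleGraph V} {w : List V}
    (hw : Represents 0 w G) {M : ℕ} (hM : ∀ v, w.count v ≤ M) (j : ℕ) :
    ∃ w' : List V, Represents 0 w' G ∧ ∀ v, w'.count v = min M (w.count v + j) := by
  induction j with
  | zero => exact ⟨w, hw, fun v => (min_eq_right (hM v)).symm⟩
  | succ j ih =>
    obtain ⟨w', hw', hcount⟩ := ih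
    refine ⟨_, hw'.append_dedup_filter_count_lt M, fun v => ?_⟩
    have hfilter : (w'.dedup.filter fun v => w'.count v < M).count v =
        if w'.count v < M then 1 else 0 := by
      split_ifs with h
      · rw [List.count_filter (by simpa using h), List.count_dedup, if_pos (hw'.1 v)]
      · exact List.count_eq_zero_of_not_mem (fun hv => h (by simpa using (List.mem_filter.1 hv).2))
    rw [List.count_append, hfilter, hcount]
    split_ifs <;> omega

lemma Representable.exists_represents_forall_count_eq [Fintype V] {G : SimpleGraph V}
    (hG : Representable 0 G) : ∃ (w : List V) (n : ℕ), Represents 0 w G ∧ ∀ v, w.count v = n := by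
  obtain ⟨w, hw⟩ := hG
  obtain ⟨w', hw', hcount⟩ := hw.exists_forall_count_eq_min
    (fun v => Finset.le_sup (f := w.count) (Finset.mem_univ v)) (Finset.univ.sup w.count)
  exact ⟨w', _, hw', fun v => (hcount v).trans (min_eq_left (Nat.le_add_left _ _))⟩

end Uniform

section Sandwich

variable {V : Type*} [DecidableEq V]

lemma Represents.two_le_pattern11Count_sandwich {G : SimpleGraph V} {w : List V}
    (hw : Represents 0 w G) {x y : V} (hxy : x ≠ y) (hadj : ¬ G.Adj x y) (P Q : List V) :
    2 ≤ pattern11Count (P ++ restrictWord w x y ++ restrictWord w x y ++ Q) := by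
  have := two_mul_pattern11Count_le_sandwich P (restrictWord w x y) Q
  have := mt (hw.2 x y hxy).2 hadj
  omega

lemma Represents.exists_pattern11Count_sandwich {G : SimpleGraph V} {w : List V} {n : ℕ}
    (hw : Represents 0 w G) (hn : ∀ v, w.count v = n) {x y : V} (hxy : x ≠ y) (hadj : G.Adj x y) :
    ∃ s e, s ≠ e ∧ (restrictWord w x y).dedup = [s, e] ∧ ∀ P Q : List V,
      pattern11Count (P ++ restrictWord w x y ++ restrictWord w x y ++ Q) =
        pattern11Count P + pattern11Count Q +
          (if P.getLast? = some s then 1 else 0) + (if Q.head? = some e then 1 else 0) := by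
  set A := restrictWord w x y
  have h0 : pattern11Count A = 0 := Nat.le_zero.1 ((hw.2 x y hxy).1 hadj)
  have hxA : x ∈ A := mem_restrictWord.2 ⟨hw.1 x, .inl rfl⟩
  obtain ⟨s, hs⟩ :=
    Option.ne_none_iff_exists'.1 (mt List.head?_eq_none_iff.1 (List.ne_nil_of_mem hxA))
  obtain ⟨e, he⟩ :=
    Option.ne_none_iff_exists'.1 (mt List.getLast?_eq_none_iff.1 (List.ne_nil_of_mem hxA))
  have hse : s ≠ e := head_ne_getLast_of_count_eq hxy (fun z hz => (mem_restrictWord.1 hz).2) h0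
    (by rw [count_restrictWord (.inl rfl), count_restrictWord (.inr rfl), hn, hn]) hs he
  obtain ⟨t, hte, hmem, hded⟩ := dedup_restrictWord_eq_pair hxy (hw.1 x) (hw.1 y) he
  obtain rfl : s = t := (hmem s (List.mem_of_mem_head? hs)).resolve_right hse
  refine ⟨s, e, hse, hded, fun P Q => ?_⟩
  rw [pattern11Count_sandwich hs he hse, h0]
  ring

end Sandwich

section BlockSandwich

variable {V : Type*} {k : ℕ}

def blockSandwich (B : Fin k → List V) (w : List V) : List V :=
  (List.finRange k).flatMap (fun i => (B i).reverse) ++ w ++ w ++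
    ((List.finRange k).flatMap B).reverse

lemma restrictWord_blockSandwich [DecidableEq V] (B : Fin k → List V) (w : List V) (x y : V) :
    restrictWord (blockSandwich B w) x y =
      blockSandwich (fun i => restrictWord (B i) x y) (restrictWord w x y) := by
  simp only [blockSandwich, restrictWord, List.filter_append, List.filter_flatMap,
    List.filter_reverse]

lemma blockSandwich_of_forall_ne_eq_nil {B : Fin k → List V} {i : Fin k}
    (hB : ∀ j ≠ i, B j = []) (w : List V) :
    blockSandwich B w = (B i).reverse ++ w ++ w ++ (B i).reverse := by
  rw [blockSandwich, List.flatMap_eq_of_forall_ne_eq_nil (List.nodup_finRange k)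
    (List.mem_finRange i) hB, List.flatMap_eq_of_forall_ne_eq_nil (List.nodup_finRange k)
    (List.mem_finRange i) (fun j hj => by rw [hB j hj, List.reverse_nil])]

lemma blockSandwich_of_length_le_one {B : Fin k → List V} (hB : ∀ j, (B j).length ≤ 1)
    (w : List V) :
    blockSandwich B w = (List.finRange k).flatMap B ++ w ++ w ++
      ((List.finRange k).flatMap B).reverse := by
  have hrev : ∀ j, (B j).reverse = B j := fun j => by
    match B j, hB j with
    | [], _ => rfl
    | [_], _ => rfl
  simp only [blockSandwich, hrev]

end BlockSandwich

section Blocks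

variable {V : Type*} [DecidableEq V]

lemma restrictWord_filter_mem_of_notMem {S : Set V} [DecidablePred (· ∈ S)] (D : List V)
    {x y : V} (hx : x ∉ S) (hy : y ∉ S) : restrictWord (D.filter (· ∈ S)) x y = [] := by
  simp only [restrictWord, List.filter_filter, List.filter_eq_nil_iff]
  rintro z - h
  simp only [Bool.and_eq_true, decide_eq_true_eq] at h
  rcases h with ⟨rfl | rfl, hz⟩ <;> contradiction

lemma restrictWord_filter_mem_of_mem {S : Set V} [DecidablePred (· ∈ S)] (D : List V)
    {x y : V} (hx : x ∈ S) (hy : y ∈ S) :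
    restrictWord (D.filter (· ∈ S)) x y = restrictWord D x y := by
  simp only [restrictWord, List.filter_filter]
  refine List.filter_congr fun z _ => ?_
  by_cases hz : z = x ∨ z = y
  · rcases hz with rfl | rfl <;> simp [*]
  · simp [hz]

lemma length_restrictWord_filter_mem_le_one {S : Set V} [DecidablePred (· ∈ S)] {D : List V}
    (hD : D.Nodup) {x y : V} (hxy : ¬ (x ∈ S ∧ y ∈ S)) :
    (restrictWord (D.filter (· ∈ S)) x y).length ≤ 1 := by
  have hnd : (restrictWord (D.filter (· ∈ S)) x y).Nodup := (hD.filter _).filter _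
  have hmem : ∀ z ∈ restrictWord (D.filter (· ∈ S)) x y, z ∈ S ∧ (z = x ∨ z = y) :=
    fun z hz => ⟨of_decide_eq_true (List.mem_filter.1 (mem_restrictWord.1 hz).1).2,
      (mem_restrictWord.1 hz).2⟩
  obtain ⟨a, ha⟩ : ∃ a, ∀ z ∈ restrictWord (D.filter (· ∈ S)) x y, z = a := by
    by_cases hx : x ∈ S
    · refine ⟨x, fun z hz => ?_⟩
      obtain ⟨hzS, rfl | rfl⟩ := hmem z hz
      exacts [rfl, absurd ⟨hx, hzS⟩ hxy]
    · refine ⟨y, fun z hz => ?_⟩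
      obtain ⟨hzS, rfl | rfl⟩ := hmem z hz
      exacts [absurd hzS hx, rfl]
  exact (hnd.subperm fun z hz => List.mem_singleton.2 (ha z hz)).length_le

lemma nodup_flatMap_restrictWord_filter_mem {k : ℕ} {Vs : Fin k → Set V}
    [∀ i, DecidablePred (· ∈ Vs i)] (hdisj : ∀ i j : Fin k, i ≠ j → Disjoint (Vs i) (Vs j))
    {D : List V} (hD : D.Nodup) (x y : V) :
    ((List.finRange k).flatMap fun i => restrictWord (D.filter (· ∈ Vs i)) x y).Nodup := by
  refine List.nodup_flatMap.2 ⟨fun i _ => (hD.filter _).filter _,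
    (List.nodup_finRange k).imp fun {i j} hij a hai haj => ?_⟩
  simp only [mem_restrictWord, List.mem_filter, decide_eq_true_eq] at hai haj
  exact Set.disjoint_left.1 (hdisj i j hij) hai.1.2 haj.1.2

end Blocks

/-- if `G` is a finite word-representable graph, `V₁, …, V_k` are pairwise
disjoint subsets of the vertex set, and `H` is obtained from `G` by removing every edge
whose both endpoints lie in the same set `V_i`, then `H` is 1-11-representable. -/
theorem stmt1 {V : Type*} [Fintype V] [DecidableEq V] (G : SimpleGraph V)
    (hG : Representable 0 G) (k : ℕ) (Vs : Fin k → Set V)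
    (hdisj : ∀ i j : Fin k, i ≠ j → Disjoint (Vs i) (Vs j))
    (H : SimpleGraph V)
    (hH : ∀ x y : V, H.Adj x y ↔ (G.Adj x y ∧ ∀ i : Fin k, ¬ (x ∈ Vs i ∧ y ∈ Vs i))) :
    Representable 1 H := by
  classical
  obtain ⟨w, n, hw, hn⟩ := hG.exists_represents_forall_count_eq
  refine ⟨blockSandwich (fun i => w.dedup.filter (· ∈ Vs i)) w,
    fun v => by simp [blockSandwich, hw.1 v], fun x y hxy => ?_⟩
  rw [hH, restrictWord_blockSandwich]
  by_cases hadj : G.Adj x y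
  swap
  · refine iff_of_false (fun h => hadj h.1) ?_
    exact not_le.2 (hw.two_le_pattern11Count_sandwich hxy hadj _ _)
  obtain ⟨s, e, hse, hded, hcount⟩ := hw.exists_pattern11Count_sandwich hn hxy hadj
  by_cases hsame : ∃ i, x ∈ Vs i ∧ y ∈ Vs i
  · obtain ⟨i, hxi, hyi⟩ := hsame
    rw [blockSandwich_of_forall_ne_eq_nil (i := i) (fun j hj => restrictWord_filter_mem_of_notMem _
      (Set.disjoint_left.1 (hdisj i j hj.symm) hxi) (Set.disjoint_left.1 (hdisj i j hj.symm) hyi)),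
      restrictWord_filter_mem_of_mem _ hxi hyi, restrictWord_dedup, hded, hcount]
    exact iff_of_false (fun h => h.2 i ⟨hxi, hyi⟩) (by simp)
  · rw [not_exists] at hsame
    have hnd := nodup_flatMap_restrictWord_filter_mem hdisj (List.nodup_dedup w) x y
    rw [blockSandwich_of_length_le_one (fun j => length_restrictWord_filter_mem_le_one
      (List.nodup_dedup w) (hsame j)), hcount,
      pattern11Count_eq_zero_of_nodup hnd,
      pattern11Count_eq_zero_of_nodup (List.nodup_reverse.2 hnd), List.head?_reverse]
    refine iff_of_true ⟨hadj, hsame⟩ ?_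
    split_ifs with hs he
    · exact absurd (Option.some_inj.1 (hs.symm.trans he)) hse
    all_goals omega
end

section
/- The Chvátal graph is 1-11-representable. -/
/-- The edges of the Chvátal graph, with vertices labelled 1,…,12. -/
def chvatalEdgeList : List (ℕ × ℕ) :=
  [(1,2),(1,4),(1,7),(1,12),(2,3),(2,6),(2,9),(3,4),(3,8),(3,11),(4,5),(4,10),
   (5,6),(5,9),(5,12),(6,7),(6,10),(7,8),(7,11),(8,9),(8,12),(9,10),(10,11),(11,12)]

/-- The Chvátal graph on `Fin 12`, where the vertex `x : Fin 12` carries the label `x+1`. -/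
def chvatalGraph : SimpleGraph (Fin 12) :=
  SimpleGraph.fromRel (fun x y => (x.val + 1, y.val + 1) ∈ chvatalEdgeList)

instance : DecidableRel chvatalGraph.Adj := fun x y =>
  decidable_of_iff _ (SimpleGraph.fromRel_adj _ x y).symm

/-- the Chvátal graph is 1-11-representable. -/
theorem stmt3 : Representable 1 chvatalGraph := by
  refine ⟨[4,9,5,8,3,0,2,3,7,10,1,2,9,11,11,6,10,1,0,8,4,5,1,7,8,11,3,2,6,7,0,5,6,1,4,9,10,5,11,3,8,4,9,0,6,10,7,2], ?_, ?_⟩ <;> decide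
end

section
/- The orientation of the graph obtained from the Chvátal graph by adding the two edges {1,3} and {2,4}, given by the arc set {1→12, 2→1, 3→1, 3→2, 3→8, 3→11, 4→1, 4→2, 4→3, 4→5, 4→10, 5→12, 6→2, 6→5, 6→7, 6→10, 7→1, 7→8, 7→11, 8→12, 9→2, 9→5, 9→8, 9→10, 10→11, 11→12}, is a semi-transitive orientation; in particular, the Chvátal graph with the two added edges {1,3} and {2,4} admits a semi-transitive orientation. -/
/-- The Chvátal graph extended by the two edges {1,3} and {2,4},
on `Fin 12`, where the vertex `x : Fin 12` carries the label `x+1`. -/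
def chvatalPlus : SimpleGraph (Fin 12) :=
  SimpleGraph.fromRel
    (fun x y => (x.val + 1, y.val + 1) ∈ chvatalEdgeList ++ [(1,3),(2,4)])

/-- The arcs of the orientation, as ordered pairs of labels in 1,…,12. -/
def chvatalArcList : List (ℕ × ℕ) :=
  [(1,12),(2,1),(3,1),(3,2),(3,8),(3,11),(4,1),(4,2),(4,3),(4,5),(4,10),(5,12),
   (6,2),(6,5),(6,7),(6,10),(7,1),(7,8),(7,11),(8,12),(9,2),(9,5),(9,8),(9,10),
   (10,11),(11,12)]

/-- The arc relation of the orientation on `Fin 12` (labels shifted by one). -/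
def chvatalOrient (x y : Fin 12) : Prop :=
  (x.val + 1, y.val + 1) ∈ chvatalArcList

/-- A binary relation (arc set) is a semi-transitive orientation if it is acyclic and,
for every directed path `p 0 → p 1 → ⋯ → p k` with `k ≥ 2`, either there is no arc from
`p 0` to `p k`, or the arc `p i → p j` is present for all `i < j ≤ k`. -/
def SemiTransitive {V : Type*} (A : V → V → Prop) : Prop :=
  (∀ v : V, ¬ Relation.TransGen A v v) ∧
  (∀ k : ℕ, 2 ≤ k → ∀ p : ℕ → V, (∀ i < k, A (p i) (p (i + 1))) →
    A (p 0) (p k) → ∀ i j : ℕ, i < j → j ≤ k → A (p i) (p j))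

/-!
The orientation is acyclic because it is compatible with an explicit topological order.
Semi-transitivity then amounts to: every arc `a → d` with `a ⇝ b ⇝⁺ c ⇝ d` forces the arc
`b → c`. This is a finite check over quadruples once reachability is known in closed form:
the listed relation `chvatalReach` contains every arc and is closed under prepending arcs,
hence contains the transitive closure.
-/

namespace Relation

variable {V : Type*} {A : V → V → Prop}

theorem not_transGen_self_of_rank {α : Type*} [Preorder α] (rank : V → α)
    (h_rank : ∀ x y, A x y → rank x < rank y) (v : V) : ¬ TransGen A v v := fun hv =>
  lt_irrefl (rank v) (transGen_eq_self.le _ _ (hv.lift rank h_rank))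

theorem transGen_of_path {p : ℕ → V} {k : ℕ} (hp : ∀ i < k, A (p i) (p (i + 1)))
    {i j : ℕ} (hij : i < j) (hjk : j ≤ k) : TransGen A (p i) (p j) := by
  induction j, hij using Nat.le_induction with
  | base => exact .single (hp i (by omega))
  | succ j _ ih => exact (ih (by omega)).tail (hp j (by omega))

theorem reflTransGen_of_path {p : ℕ → V} {k : ℕ} (hp : ∀ i < k, A (p i) (p (i + 1)))
    {i j : ℕ} (hij : i ≤ j) (hjk : j ≤ k) : ReflTransGen A (p i) (p j) := by
  rcases hij.lt_or_eq with hij | rfl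
  · exact (transGen_of_path hp hij hjk).to_reflTransGen
  · exact .refl

end Relation

open Relation

theorem semiTransitive_of_rank_of_shortcut {V α : Type*} [Preorder α] {A : V → V → Prop}
    (rank : V → α) (h_rank : ∀ x y, A x y → rank x < rank y)
    (h_shortcut : ∀ a b c d, A a d → ReflTransGen A a b → TransGen A b c →
      ReflTransGen A c d → A b c) :
    SemiTransitive A := by
  refine ⟨not_transGen_self_of_rank rank h_rank, fun k _ p hp h0k i j hij hjk => ?_⟩
  exact h_shortcut _ _ _ _ h0k (reflTransGen_of_path hp (Nat.zero_le i) (by omega))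
    (transGen_of_path hp hij hjk) (reflTransGen_of_path hp hjk le_rfl)

instance : DecidableRel chvatalOrient := fun _ _ => by
  unfold chvatalOrient; infer_instance

def chvatalReachList : List (ℕ × ℕ) :=
  [(1,12),(2,1),(2,12),(3,1),(3,2),(3,8),(3,11),(3,12),(4,1),(4,2),(4,3),(4,5),
   (4,8),(4,10),(4,11),(4,12),(5,12),(6,1),(6,2),(6,5),(6,7),(6,8),(6,10),(6,11),
   (6,12),(7,1),(7,8),(7,11),(7,12),(8,12),(9,1),(9,2),(9,5),(9,8),(9,10),(9,11),
   (9,12),(10,11),(10,12),(11,12)]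

def chvatalReach (x y : Fin 12) : Prop :=
  (x.val + 1, y.val + 1) ∈ chvatalReachList

instance : DecidableRel chvatalReach := fun _ _ => by
  unfold chvatalReach; infer_instance

theorem chvatalReach_of_transGen {x y : Fin 12} (h : TransGen chvatalOrient x y) :
    chvatalReach x y := by
  have h_arc : ∀ x y, chvatalOrient x y → chvatalReach x y := by decide
  have h_head : ∀ x y z, chvatalOrient x y → chvatalReach y z → chvatalReach x z := by decide
  induction h using TransGen.head_induction_on with
  | single h => exact h_arc _ _ h
  | head h _ ih => exact h_head _ _ _ h ih

theorem chvatalOrient_shortcut (a b c d : Fin 12) (had : chvatalOrient a d)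
    (hab : ReflTransGen chvatalOrient a b) (hbc : TransGen chvatalOrient b c)
    (hcd : ReflTransGen chvatalOrient c d) : chvatalOrient b c := by
  have h_check : ∀ a b c d, chvatalOrient a d → (a = b ∨ chvatalReach a b) →
      chvatalReach b c → (c = d ∨ chvatalReach c d) → chvatalOrient b c := by decide
  refine h_check a b c d had ?_ (chvatalReach_of_transGen hbc) ?_
  · exact (reflTransGen_iff_eq_or_transGen.mp hab).imp Eq.symm chvatalReach_of_transGen
  · exact (reflTransGen_iff_eq_or_transGen.mp hcd).imp Eq.symm chvatalReach_of_transGen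

def chvatalRank (x : Fin 12) : ℕ := [10,9,6,3,5,1,2,7,0,4,8,11].getD x.val 0

theorem chvatalRank_lt_of_chvatalOrient :
    ∀ x y, chvatalOrient x y → chvatalRank x < chvatalRank y := by decide

theorem chvatalPlus_adj_iff :
    ∀ x y : Fin 12, chvatalPlus.Adj x y ↔ (chvatalOrient x y ∨ chvatalOrient y x) := by
  simp only [chvatalPlus, SimpleGraph.fromRel_adj]
  decide

/-- the given arc set is an orientation of the Chvátal graph extended by the
edges {1,3} and {2,4}, and this orientation is semi-transitive; in particular, the extended
Chvátal graph admits a semi-transitive orientation. -/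
theorem stmt4 :
    (∀ x y : Fin 12, chvatalPlus.Adj x y ↔ (chvatalOrient x y ∨ chvatalOrient y x)) ∧
    SemiTransitive chvatalOrient :=
  ⟨chvatalPlus_adj_iff,
    semiTransitive_of_rank_of_shortcut chvatalRank chvatalRank_lt_of_chvatalOrient
      chvatalOrient_shortcut⟩
end

section
/- For every integer n ≥ 3, the 2-uniform word obtained by concatenating the blocks v_{i+1} v_i for i = 1, 2, …, n (indices taken modulo n), i.e., the word v_2 v_1 v_3 v_2 ⋯ v_n v_{n-1} v_1 v_n, word-represents (0-11-represents) the cycle C_n on vertex set {v_1,…,v_n}, whose edges are v_i v_{i+1} for all i (indices modulo n). -/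
/-- The cyclic successor on `Fin n`: `i ↦ i + 1 (mod n)`. -/
def finSucc {n : ℕ} (i : Fin n) : Fin n := ⟨((i : ℕ) + 1) % n, Nat.mod_lt _ i.pos⟩

/-- The cycle `C_n` on vertex set `Fin n` (vertex `i` is `v_{i+1}`), with edges
`v_i v_{i+1}` for all `i`, indices mod `n`. -/
def cycleGraphModN (n : ℕ) : SimpleGraph (Fin n) :=
  SimpleGraph.fromRel (fun i j => (j : ℕ) = ((i : ℕ) + 1) % n)

/-- The 2-uniform word `v_2 v_1 v_3 v_2 ⋯ v_n v_{n-1} v_1 v_n`, the concatenation of the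
blocks `v_{i+1} v_i` over `i` (indices mod `n`). -/
def cycleWord (n : ℕ) : List (Fin n) :=
  (List.finRange n).flatMap (fun i => [finSucc i, i])

/-!
Vertex `v` occurs twice in `cycleWord n`: first in the block of its cyclic predecessor, then in
its own block. So for `x < y` the word `w|_{x,y}` is read off from the blocks of `x`, `y` and of
their predecessors, taken in increasing order. These interleave, making `w|_{x,y}` alternate,
exactly when `y = x + 1` or `(x, y) = (0, n - 1)`; otherwise `w|_{x,y}` is `xxyy` or `xyyx`.
The bound `n ≥ 3` keeps the predecessor of `0` away from `1` and that of `n - 1` away from `0`.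
-/

open List

section Words

variable {V : Type*} [DecidableEq V]

lemma pattern11Count_eq_zero_iff_isChain (l : List V) :
    pattern11Count l = 0 ↔ l.IsChain (· ≠ ·) := by
  induction l with
  | nil => simp [pattern11Count]
  | cons a l ih =>
    cases l with
    | nil => simp [pattern11Count]
    | cons b l =>
      rw [isChain_cons_cons, ← ih]
      by_cases h : a = b <;> simp [pattern11Count, h]

lemma restrictWord_comm (w : List V) (x y : V) : restrictWord w x y = restrictWord w y x := by
  simp only [restrictWord, or_comm]

lemma restrictWord_flatMap {α : Type*} (l : List α) (f : α → List V) (x y : V) :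
    restrictWord (l.flatMap f) x y = l.flatMap fun a => restrictWord (f a) x y :=
  filter_flatMap

end Words

lemma List.flatMap_eq_flatMap_filter {α β : Type*} (g : α → List β) (p : α → Bool) (l : List α)
    (h : ∀ a ∈ l, ¬ p a → g a = []) : l.flatMap g = (l.filter p).flatMap g := by
  induction l with
  | nil => rfl
  | cons a l ih =>
    have ih' := ih fun b hb => h b (mem_cons_of_mem a hb)
    by_cases hp : p a
    · simp [hp, ih']
    · simp [hp, ih', h a mem_cons_self hp]

lemma List.filter_mem_finRange {n : ℕ} {S : List (Fin n)} (hS : S.IsChain (· < ·)) :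
    (finRange n).filter (· ∈ S) = S := by
  rw [isChain_iff_pairwise] at hS
  refine Perm.eq_of_pairwise (le := (· < ·))
    (fun _ _ _ _ h h' => absurd (h.trans h') (lt_irrefl _))
    ((pairwise_lt_finRange n).filter _) hS ?_
  rw [perm_ext_iff_of_nodup ((nodup_finRange n).filter _) hS.nodup]
  simp

lemma List.flatMap_finRange_eq_of_support {n : ℕ} {β : Type*} (g : Fin n → List β)
    {S : List (Fin n)} (hS : S.IsChain (· < ·)) (h : ∀ i ∉ S, g i = []) :
    (finRange n).flatMap g = S.flatMap g := by
  rw [flatMap_eq_flatMap_filter g (· ∈ S) _ fun i _ hi => h i (by simpa using hi),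
    filter_mem_finRange hS]

section Cycle

variable {n : ℕ}

lemma val_finSucc (i : Fin n) : (finSucc i : ℕ) = ((i : ℕ) + 1) % n := rfl

lemma finSucc_eq_iff {i j : Fin n} :
    finSucc i = j ↔ (i : ℕ) + 1 = n ∧ (j : ℕ) = 0 ∨ (i : ℕ) + 1 < n ∧ (j : ℕ) = i + 1 := by
  rw [Fin.ext_iff, val_finSucc]
  rcases (Nat.lt_iff_add_one_le.1 i.isLt).eq_or_lt with h | h
  · rw [h, Nat.mod_self]
    omega
  · rw [Nat.mod_eq_of_lt h]
    omega

lemma finSucc_injective : Function.Injective (finSucc : Fin n → Fin n) := by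
  intro i j h
  have hi := finSucc_eq_iff.1 (rfl : finSucc i = finSucc i)
  have hj := finSucc_eq_iff.1 h.symm
  ext
  omega

lemma cycleGraphModN_adj_iff {x y : Fin n} :
    (cycleGraphModN n).Adj x y ↔ x ≠ y ∧ (finSucc x = y ∨ finSucc y = x) := by
  simp only [cycleGraphModN, SimpleGraph.fromRel_adj, Fin.ext_iff, val_finSucc]
  grind

lemma cycleGraphModN_adj_iff_of_lt {x y : Fin n} (hxy : x < y) :
    (cycleGraphModN n).Adj x y ↔ (y : ℕ) = x + 1 ∨ (x : ℕ) = 0 ∧ (y : ℕ) + 1 = n := by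
  have hxy' : (x : ℕ) < y := hxy
  have hy := y.isLt
  rw [cycleGraphModN_adj_iff, and_iff_right hxy.ne, finSucc_eq_iff, finSucc_eq_iff]
  omega

lemma mem_cycleWord (v : Fin n) : v ∈ cycleWord n :=
  mem_flatMap.2 ⟨v, mem_finRange v, by simp⟩

lemma restrictWord_cycleWord_eq_flatMap {p q x y : Fin n} (hp : finSucc p = x)
    (hq : finSucc q = y) {S : List (Fin n)} (hS : S.IsChain (· < ·)) (hpS : p ∈ S)
    (hqS : q ∈ S) (hxS : x ∈ S) (hyS : y ∈ S) :
    restrictWord (cycleWord n) x y = S.flatMap fun i =>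
      (if i = p ∨ i = q then [finSucc i] else []) ++ (if i = x ∨ i = y then [i] else []) := by
  have hblock (i : Fin n) : restrictWord [finSucc i, i] x y =
      (if i = p ∨ i = q then [finSucc i] else []) ++ (if i = x ∨ i = y then [i] else []) := by
    subst hp hq
    simp only [restrictWord, filter_cons, filter_nil, finSucc_injective.eq_iff,
      decide_eq_true_eq]
    split_ifs <;> rfl
  rw [cycleWord, restrictWord_flatMap, flatMap_finRange_eq_of_support _ hS]
  · simp only [hblock]
  · intro i hi
    have h₁ : ¬(i = p ∨ i = q) := by rintro (rfl | rfl) <;> contradiction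
    have h₂ : ¬(i = x ∨ i = y) := by rintro (rfl | rfl) <;> contradiction
    rw [hblock, if_neg h₁, if_neg h₂, append_nil]

lemma restrictWord_cycleWord_of_val_eq_succ {x y : Fin n} (hx : 1 ≤ (x : ℕ))
    (hy : (y : ℕ) = x + 1) : restrictWord (cycleWord n) x y = [x, y, x, y] := by
  have hyn := y.isLt
  let p : Fin n := ⟨x - 1, by omega⟩
  have hp : finSucc p = x := finSucc_eq_iff.2 (by simp [p]; omega)
  have hq : finSucc x = y := finSucc_eq_iff.2 (by omega)
  rw [restrictWord_cycleWord_eq_flatMap hp hq (S := [p, x, y])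
    (by simp only [isChain_cons_cons, isChain_singleton, and_true, Fin.lt_def, p]; omega)
    (by simp) (by simp) (by simp) (by simp)]
  simp (disch := omega) [Fin.ext_iff, if_neg, hp, hq, p]

lemma restrictWord_cycleWord_zero_one (hn : 3 ≤ n) {x y : Fin n} (hx : (x : ℕ) = 0)
    (hy : (y : ℕ) = 1) : restrictWord (cycleWord n) x y = [y, x, y, x] := by
  let p : Fin n := ⟨n - 1, by omega⟩
  have hp : finSucc p = x := finSucc_eq_iff.2 (by simp [p]; omega)
  have hq : finSucc x = y := finSucc_eq_iff.2 (by omega)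
  rw [restrictWord_cycleWord_eq_flatMap hp hq (S := [x, y, p])
    (by simp only [isChain_cons_cons, isChain_singleton, and_true, Fin.lt_def, p]; omega)
    (by simp) (by simp) (by simp) (by simp)]
  simp (disch := omega) [Fin.ext_iff, if_neg, hp, hq, p]

lemma restrictWord_cycleWord_zero_last (hn : 3 ≤ n) {x y : Fin n} (hx : (x : ℕ) = 0)
    (hy : (y : ℕ) + 1 = n) : restrictWord (cycleWord n) x y = [x, y, x, y] := by
  let q : Fin n := ⟨n - 2, by omega⟩
  have hp : finSucc y = x := finSucc_eq_iff.2 (by omega)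
  have hq : finSucc q = y := finSucc_eq_iff.2 (by simp [q]; omega)
  rw [restrictWord_cycleWord_eq_flatMap hp hq (S := [x, q, y])
    (by simp only [isChain_cons_cons, isChain_singleton, and_true, Fin.lt_def, q]; omega)
    (by simp) (by simp) (by simp) (by simp)]
  simp (disch := omega) [Fin.ext_iff, if_neg, hp, hq, q]

lemma restrictWord_cycleWord_zero_of_lt {x y : Fin n} (hx : (x : ℕ) = 0) (hy : 1 < (y : ℕ))
    (hy' : (y : ℕ) + 1 < n) : restrictWord (cycleWord n) x y = [x, y, y, x] := by
  let p : Fin n := ⟨n - 1, by omega⟩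
  let q : Fin n := ⟨y - 1, by omega⟩
  have hp : finSucc p = x := finSucc_eq_iff.2 (by simp [p]; omega)
  have hq : finSucc q = y := finSucc_eq_iff.2 (by simp [q]; omega)
  rw [restrictWord_cycleWord_eq_flatMap hp hq (S := [x, q, y, p])
    (by simp only [isChain_cons_cons, isChain_singleton, and_true, Fin.lt_def, p, q]; omega)
    (by simp) (by simp) (by simp) (by simp)]
  simp (disch := omega) [Fin.ext_iff, if_neg, hp, hq, p, q]

lemma restrictWord_cycleWord_of_succ_lt {x y : Fin n} (hx : 1 ≤ (x : ℕ))
    (hy : (x : ℕ) + 1 < y) : restrictWord (cycleWord n) x y = [x, x, y, y] := by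
  let p : Fin n := ⟨x - 1, by omega⟩
  let q : Fin n := ⟨y - 1, by omega⟩
  have hp : finSucc p = x := finSucc_eq_iff.2 (by simp [p]; omega)
  have hq : finSucc q = y := finSucc_eq_iff.2 (by simp [q]; omega)
  rw [restrictWord_cycleWord_eq_flatMap hp hq (S := [p, x, q, y])
    (by simp only [isChain_cons_cons, isChain_singleton, and_true, Fin.lt_def, p, q]; omega)
    (by simp) (by simp) (by simp) (by simp)]
  simp (disch := omega) [Fin.ext_iff, if_neg, hp, hq, p, q]

lemma cycleGraphModN_adj_iff_pattern11Count_eq_zero (hn : 3 ≤ n) {x y : Fin n} (hxy : x < y) :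
    (cycleGraphModN n).Adj x y ↔ pattern11Count (restrictWord (cycleWord n) x y) = 0 := by
  have hxy' : (x : ℕ) < y := hxy
  have hy := y.isLt
  rw [cycleGraphModN_adj_iff_of_lt hxy, pattern11Count_eq_zero_iff_isChain]
  obtain h | h | h | h | h : (1 ≤ (x : ℕ) ∧ (y : ℕ) = x + 1) ∨ ((x : ℕ) = 0 ∧ (y : ℕ) = 1) ∨
      ((x : ℕ) = 0 ∧ (y : ℕ) + 1 = n) ∨ ((x : ℕ) = 0 ∧ 1 < (y : ℕ) ∧ (y : ℕ) + 1 < n) ∨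
      (1 ≤ (x : ℕ) ∧ (x : ℕ) + 1 < y) := by omega
  · rw [restrictWord_cycleWord_of_val_eq_succ h.1 h.2]
    exact iff_of_true (by omega) (by simp [hxy.ne, hxy.ne'])
  · rw [restrictWord_cycleWord_zero_one hn h.1 h.2]
    exact iff_of_true (by omega) (by simp [hxy.ne, hxy.ne'])
  · rw [restrictWord_cycleWord_zero_last hn h.1 h.2]
    exact iff_of_true (by omega) (by simp [hxy.ne, hxy.ne'])
  · rw [restrictWord_cycleWord_zero_of_lt h.1 h.2.1 h.2.2]
    exact iff_of_false (by omega) (by simp)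
  · rw [restrictWord_cycleWord_of_succ_lt h.1 h.2]
    exact iff_of_false (by omega) (by simp)

end Cycle

/-- for every `n ≥ 3`, the word obtained by concatenating the blocks
`v_{i+1} v_i` word-represents (0-11-represents) the cycle `C_n`. -/
theorem stmt9 : ∀ n : ℕ, 3 ≤ n → Represents 0 (cycleWord n) (cycleGraphModN n) := by
  intro n hn
  refine ⟨mem_cycleWord, fun x y hxy => ?_⟩
  rw [Nat.le_zero]
  rcases hxy.lt_or_gt with h | h
  · exact cycleGraphModN_adj_iff_pattern11Count_eq_zero hn h
  · rw [SimpleGraph.adj_comm, restrictWord_comm]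
    exact cycleGraphModN_adj_iff_pattern11Count_eq_zero hn h
end

section
/- In the Chvátal graph, each of the four vertex subsets V1 = {2,3,5,6,8,9,12}, V2 = {3,4,6,7,8,10,11}, V3 = {1,4,5,8,9,10,12}, and V4 = {1,2,6,7,10,11,12} induces a subgraph isomorphic to the graph BW3, and V1 ∩ V2 ∩ V3 ∩ V4 = ∅. Consequently, for every vertex v of the Chvátal graph, the graph obtained by deleting v contains an induced subgraph isomorphic to BW3. -/
/-- The edges of the graph `BW₃`, with vertices labelled 1,…,7: the 6-cycle 1,…,6
together with the vertex 7 joined to 2, 4, 6. -/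
def bw3EdgeList : List (ℕ × ℕ) :=
  [(1,2),(2,3),(3,4),(4,5),(5,6),(6,1),(7,2),(7,4),(7,6)]

/-- The graph `BW₃` on `Fin 7`, where the vertex `x : Fin 7` carries the label `x+1`. -/
def bw3 : SimpleGraph (Fin 7) :=
  SimpleGraph.fromRel (fun x y => (x.val + 1, y.val + 1) ∈ bw3EdgeList)

/-- The subset of `Fin 12` whose labels (`x+1`) lie in the given set of naturals. -/
def labelSet (s : Set ℕ) : Set (Fin 12) := {x : Fin 12 | x.val + 1 ∈ s}

/-- `S` induces in the Chvátal graph a subgraph isomorphic to `BW₃`. -/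
def IsInducedBW3 (S : Set (Fin 12)) : Prop :=
  ∃ f : Fin 7 → Fin 12, Function.Injective f ∧ Set.range f = S ∧
    ∀ a b : Fin 7, bw3.Adj a b ↔ chvatalGraph.Adj (f a) (f b)

lemma h1 : IsInducedBW3 (labelSet {2,3,5,6,8,9,12}) := by
  refine ⟨![2,1,5,4,11,7,8], by decide, ?_, by
    simp only [bw3, chvatalGraph, SimpleGraph.fromRel_adj]
    decide⟩
  ext x
  simp only [labelSet, Set.mem_range, Set.mem_setOf_eq, Set.mem_insert_iff,
    Set.mem_singleton_iff]
  revert x; decide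

lemma h2 : IsInducedBW3 (labelSet {3,4,6,7,8,10,11}) := by
  refine ⟨![3,2,7,6,5,9,10], by decide, ?_, by
    simp only [bw3, chvatalGraph, SimpleGraph.fromRel_adj]
    decide⟩
  ext x
  simp only [labelSet, Set.mem_range, Set.mem_setOf_eq, Set.mem_insert_iff,
    Set.mem_singleton_iff]
  revert x; decide

lemma h3 : IsInducedBW3 (labelSet {1,4,5,8,9,10,12}) := by
  refine ⟨![0,3,9,8,7,11,4], by decide, ?_, by
    simp only [bw3, chvatalGraph, SimpleGraph.fromRel_adj]
    decide⟩
  ext x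
  simp only [labelSet, Set.mem_range, Set.mem_setOf_eq, Set.mem_insert_iff,
    Set.mem_singleton_iff]
  revert x; decide

lemma h4 : IsInducedBW3 (labelSet {1,2,6,7,10,11,12}) := by
  refine ⟨![1,0,11,10,9,5,6], by decide, ?_, by
    simp only [bw3, chvatalGraph, SimpleGraph.fromRel_adj]
    decide⟩
  ext x
  simp only [labelSet, Set.mem_range, Set.mem_setOf_eq, Set.mem_insert_iff,
    Set.mem_singleton_iff]
  revert x; decide

/-- each of the four listed vertex subsets of the Chvátal graph induces a
subgraph isomorphic to `BW₃`, their intersection is empty, and consequently for every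
vertex `v` there is an induced copy of `BW₃` avoiding `v`. -/
theorem stmt15 :
    IsInducedBW3 (labelSet {2,3,5,6,8,9,12}) ∧
    IsInducedBW3 (labelSet {3,4,6,7,8,10,11}) ∧
    IsInducedBW3 (labelSet {1,4,5,8,9,10,12}) ∧
    IsInducedBW3 (labelSet {1,2,6,7,10,11,12}) ∧
    labelSet {2,3,5,6,8,9,12} ∩ labelSet {3,4,6,7,8,10,11} ∩
      labelSet {1,4,5,8,9,10,12} ∩ labelSet {1,2,6,7,10,11,12} = ∅ ∧
    ∀ v : Fin 12, ∃ S : Set (Fin 12), v ∉ S ∧ IsInducedBW3 S := by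
  refine ⟨h1, h2, h3, h4, ?_, ?_⟩
  · ext x
    simp only [labelSet, Set.mem_inter_iff, Set.mem_setOf_eq, Set.mem_insert_iff,
      Set.mem_singleton_iff, Set.mem_empty_iff_false, iff_false]
    revert x; decide
  · intro v
    fin_cases v
    · exact ⟨_, by simp only [labelSet, Set.mem_setOf_eq, Set.mem_insert_iff, Set.mem_singleton_iff]; decide, h1⟩
    · exact ⟨_, by simp only [labelSet, Set.mem_setOf_eq, Set.mem_insert_iff, Set.mem_singleton_iff]; decide, h2⟩
    · exact ⟨_, by simp only [labelSet, Set.mem_setOf_eq, Set.mem_insert_iff, Set.mem_singleton_iff]; decide, h3⟩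
    · exact ⟨_, by simp only [labelSet, Set.mem_setOf_eq, Set.mem_insert_iff, Set.mem_singleton_iff]; decide, h4⟩
    · exact ⟨_, by simp only [labelSet, Set.mem_setOf_eq, Set.mem_insert_iff, Set.mem_singleton_iff]; decide, h2⟩
    · exact ⟨_, by simp only [labelSet, Set.mem_setOf_eq, Set.mem_insert_iff, Set.mem_singleton_iff]; decide, h3⟩
    · exact ⟨_, by simp only [labelSet, Set.mem_setOf_eq, Set.mem_insert_iff, Set.mem_singleton_iff]; decide, h1⟩
    · exact ⟨_, by simp only [labelSet, Set.mem_setOf_eq, Set.mem_insert_iff, Set.mem_singleton_iff]; decide, h4⟩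
    · exact ⟨_, by simp only [labelSet, Set.mem_setOf_eq, Set.mem_insert_iff, Set.mem_singleton_iff]; decide, h2⟩
    · exact ⟨_, by simp only [labelSet, Set.mem_setOf_eq, Set.mem_insert_iff, Set.mem_singleton_iff]; decide, h1⟩
    · exact ⟨_, by simp only [labelSet, Set.mem_setOf_eq, Set.mem_insert_iff, Set.mem_singleton_iff]; decide, h3⟩
    · exact ⟨_, by simp only [labelSet, Set.mem_setOf_eq, Set.mem_insert_iff, Set.mem_singleton_iff]; decide, h2⟩
end
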